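/- For every p ≥ 2 there exists a constant c_p > 0 such that for all x, y in a real Hilbert space H, | ‖x+y‖^p − ‖x‖^p − p ‖x‖^{p−2} ⟨x, y⟩ | ≤ c_p ( ‖x‖^{p−2} ‖y‖² + ‖y‖^p ). -/

import Mathlib

open Real

/-- Tangent line inequality for rpow: `s^q ≤ 1 + q (s-1) s^(q-1)` for `q ≥ 1`, `s > 0`. -/
lemma tangent_rpow {q s : ℝ} (hq : 1 ≤ q) (hs : 0 < s) :
    s ^ q ≤ 1 + q * (s - 1) * s ^ (q - 1) := by
  have hpos : (0:ℝ) < 1 + (1 - s) / s := by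
    have h1 : (1 + (1 - s) / s) = 1 / s := by field_simp; ring
    rw [h1]; positivity
  have ht : -1 ≤ (1 - s) / s := by linarith
  have hB := one_add_mul_self_le_rpow_one_add ht hq
  have h1 : (1 + (1 - s) / s) = 1 / s := by field_simp; ring
  rw [h1] at hB
  have h2 : (1 / s) ^ q = 1 / s ^ q := by
    rw [one_div, one_div, ← Real.rpow_neg_one, ← Real.rpow_mul hs.le, ← Real.rpow_neg hs.le]
    ring_nf
  rw [h2] at hB
  have hsq : 0 < s ^ q := Real.rpow_pos_of_pos hs q
  have hsq1 : s ^ (q - 1) = s ^ q / s := by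
    rw [Real.rpow_sub hs, Real.rpow_one]
  rw [hsq1]
  have := mul_le_mul_of_nonneg_left hB hsq.le
  rw [mul_one_div, div_self hsq.ne'] at this
  have hexp : s ^ q * (1 + q * ((1 - s) / s)) = s ^ q + q * (1 - s) * (s ^ q / s) := by
    field_simp
  rw [hexp] at this
  nlinarith [this]

/-- Scalar Taylor estimate: for `q ≥ 1` and `u ∈ [-1,3]`,
`|(1+u)^q - 1 - q u| ≤ q² 4^q u²`. -/
lemma taylor_scalar {q u : ℝ} (hq : 1 ≤ q) (h1 : -1 ≤ u) (h3 : u ≤ 3) :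
    |(1 + u) ^ q - 1 - q * u| ≤ q ^ 2 * 4 ^ q * u ^ 2 := by
  have h4 : (1:ℝ) ≤ 4 ^ q := by
    calc (1:ℝ) = 1 ^ q := (Real.one_rpow q).symm
    _ ≤ 4 ^ q := Real.rpow_le_rpow (by norm_num) (by norm_num) (by linarith)
  have hlow : 0 ≤ (1 + u) ^ q - 1 - q * u := by
    have := one_add_mul_self_le_rpow_one_add h1 hq
    linarith
  rw [abs_of_nonneg hlow]
  rcases eq_or_lt_of_le h1 with rfl | h1'
  · -- u = -1
    rw [show (1:ℝ) + -1 = 0 by ring, Real.zero_rpow (by linarith : q ≠ 0)]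
    nlinarith [sq_nonneg q]
  · have hs : 0 < 1 + u := by linarith
    have htan := tangent_rpow hq hs
    have hkey : u * ((1 + u) ^ (q - 1) - 1) ≤ q * 4 ^ q * u ^ 2 := by
      rcases le_or_gt 0 u with hu | hu
      · -- u ≥ 0 : bound (1+u)^(q-1) - 1 ≤ q * 4^q * u
        have hd : (1 + u) ^ (q - 1) - 1 ≤ q * 4 ^ q * u := by
          rcases le_or_gt (q - 1) 1 with hq1 | hq1
          · have hB := rpow_one_add_le_one_add_mul_self h1 (by linarith : 0 ≤ q - 1) hq1
            have hcoef : q - 1 ≤ q * 4 ^ q := by nlinarith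
            have := mul_le_mul_of_nonneg_right hcoef hu
            nlinarith
          · have htan2 := tangent_rpow (by linarith : 1 ≤ q - 1) hs
            have hb : (1 + u) ^ (q - 1 - 1) ≤ 4 ^ q := by
              calc (1 + u) ^ (q - 1 - 1) ≤ 4 ^ (q - 1 - 1) :=
                    Real.rpow_le_rpow hs.le (by linarith) (by linarith)
                _ ≤ 4 ^ q := Real.rpow_le_rpow_of_exponent_le (by norm_num) (by linarith)
            have hb2 : (q-1) * u * (1+u)^(q-1-1) ≤ (q-1) * u * 4^q :=
              mul_le_mul_of_nonneg_left hb (by nlinarith)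
            have hrw : 1 + (1 + u) - 1 = 1 + u := by ring
            nlinarith [htan2]
        nlinarith [mul_le_mul_of_nonneg_left hd hu]
      · -- -1 < u < 0 : bound 1 - (1+u)^(q-1) ≤ q * (-u)
        have hd : 1 - (1 + u) ^ (q - 1) ≤ q * (-u) := by
          rcases le_or_gt (q - 1) 1 with hq1 | hq1
          · have : (1 + u) ^ (1:ℝ) ≤ (1 + u) ^ (q - 1) :=
              Real.rpow_le_rpow_of_exponent_ge hs (by linarith) hq1
            rw [Real.rpow_one] at this
            nlinarith [mul_nonneg (sub_nonneg.2 hq) (by linarith : (0:ℝ) ≤ -u)]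
          · have := one_add_mul_self_le_rpow_one_add h1 (by linarith : 1 ≤ q - 1)
            nlinarith
        nlinarith [mul_le_mul_of_nonneg_left hd (by linarith : (0:ℝ) ≤ -u),
          mul_nonneg (mul_nonneg (by linarith : (0:ℝ) ≤ q) (sq_nonneg u))
            (by linarith : (0:ℝ) ≤ 4 ^ q - 1)]
    nlinarith [htan, mul_le_mul_of_nonneg_left hkey (by linarith : (0:ℝ) ≤ q)]

/-- Scaled Taylor estimate. -/
lemma taylor_scaled {q a v : ℝ} (hq : 1 ≤ q) (ha : 0 < a) (h1 : -a ≤ v) (h3 : v ≤ 3 * a) :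
    |(a + v) ^ q - a ^ q - q * a ^ (q - 1) * v| ≤ q ^ 2 * 4 ^ q * a ^ (q - 2) * v ^ 2 := by
  set u : ℝ := v / a with hu
  have hv : v = a * u := by rw [hu]; field_simp
  have hu1 : -1 ≤ u := by rw [hu, neg_le, ← neg_div]; exact (div_le_one ha).2 (by linarith)
  have hu3 : u ≤ 3 := by rw [hu]; exact (div_le_iff₀ ha).2 (by linarith)
  have haq : 0 < a ^ q := Real.rpow_pos_of_pos ha q
  have hsplit : (a + v) ^ q = a ^ q * (1 + u) ^ q := by
    rw [show a + v = a * (1 + u) by rw [hv]; ring,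
      Real.mul_rpow ha.le (by linarith : (0:ℝ) ≤ 1 + u)]
  have hq1 : a ^ (q - 1) = a ^ q / a := by rw [Real.rpow_sub ha, Real.rpow_one]
  have hq2 : a ^ (q - 2) = a ^ q / a ^ 2 := by
    rw [Real.rpow_sub ha, ← Real.rpow_natCast a 2]; norm_num
  have hA := taylor_scalar hq hu1 hu3
  have key : (a + v) ^ q - a ^ q - q * a ^ (q - 1) * v
      = a ^ q * ((1 + u) ^ q - 1 - q * u) := by
    rw [hsplit, hq1, hv]; field_simp
  rw [key, abs_mul, abs_of_pos haq, hq2, hv]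
  calc a ^ q * |(1 + u) ^ q - 1 - q * u| ≤ a ^ q * (q ^ 2 * 4 ^ q * u ^ 2) :=
        mul_le_mul_of_nonneg_left hA haq.le
    _ = q ^ 2 * 4 ^ q * (a ^ q / a ^ 2) * (a * u) ^ 2 := by field_simp

lemma rpow_sq_helper {t : ℝ} (ht : 0 ≤ t) (r : ℝ) : (t ^ 2) ^ r = t ^ (2 * r) := by
  rw [← Real.rpow_natCast t 2, ← Real.rpow_mul ht]
  norm_num


set_option maxHeartbeats 1000000 in
/-- Taylor-type estimate: for every `p ≥ 2` there is `c_p > 0` such that for all `x, y` in a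
real inner product space, `|‖x+y‖^p − ‖x‖^p − p ‖x‖^{p−2} ⟪x,y⟫| ≤ c_p (‖x‖^{p−2} ‖y‖² + ‖y‖^p)`. -/
theorem norm_pow_taylor_estimate
    {H : Type*} [NormedAddCommGroup H] [InnerProductSpace ℝ H] :
    ∀ p : ℝ, 2 ≤ p → ∃ c : ℝ, 0 < c ∧ ∀ x y : H,
      |‖x + y‖ ^ p - ‖x‖ ^ p - p * ‖x‖ ^ (p - 2) * inner ℝ x y|
        ≤ c * (‖x‖ ^ (p - 2) * ‖y‖ ^ 2 + ‖y‖ ^ p) := by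
  intro p hp
  have hp0 : (0:ℝ) < p := by linarith
  have hq : 1 ≤ p / 2 := by linarith
  have h4q : (0:ℝ) < 4 ^ (p / 2) := Real.rpow_pos_of_pos (by norm_num) _
  have h2p : (0:ℝ) < 2 ^ p := Real.rpow_pos_of_pos (by norm_num) _
  refine ⟨9 * (p / 2) ^ 2 * 4 ^ (p / 2) + 2 ^ p + p + 1,
    by nlinarith [sq_nonneg (p / 2)], ?_⟩
  intro x y
  have hxp2 : (0:ℝ) ≤ ‖x‖ ^ (p - 2) := Real.rpow_nonneg (norm_nonneg x) _
  have hyp : (0:ℝ) ≤ ‖y‖ ^ p := Real.rpow_nonneg (norm_nonneg y) _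
  have hT : (0:ℝ) ≤ ‖x‖ ^ (p - 2) * ‖y‖ ^ 2 := by positivity
  have hiCS := abs_real_inner_le_norm x y
  rcases le_or_gt ‖y‖ ‖x‖ with hyx | hxy
  · -- main case : ‖y‖ ≤ ‖x‖
    rcases eq_or_ne x 0 with rfl | hxne
    · have hy : ‖y‖ = 0 := le_antisymm (by simpa using hyx) (norm_nonneg y)
      have hy0 : y = 0 := norm_eq_zero.1 hy
      subst hy0
      simp [Real.zero_rpow hp0.ne']
    · have hx : 0 < ‖x‖ := norm_pos_iff.2 hxne
      have hia := abs_le.1 hiCS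
      have hyy : ‖y‖ ^ 2 ≤ ‖x‖ * ‖y‖ := by nlinarith [norm_nonneg y]
      have hxx : ‖x‖ * ‖y‖ ≤ ‖x‖ * ‖x‖ := mul_le_mul_of_nonneg_left hyx hx.le
      have hav : ‖x‖ ^ 2 + (2 * (inner ℝ x y : ℝ) + ‖y‖ ^ 2) = ‖x + y‖ ^ 2 := by
        rw [norm_add_sq_real]; ring
      have h1 : -(‖x‖ ^ 2) ≤ 2 * (inner ℝ x y : ℝ) + ‖y‖ ^ 2 := by
        nlinarith [sq_nonneg ‖x + y‖]
      have h3 : 2 * (inner ℝ x y : ℝ) + ‖y‖ ^ 2 ≤ 3 * ‖x‖ ^ 2 := by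
        nlinarith [hia.2]
      have hv2 : (2 * (inner ℝ x y : ℝ) + ‖y‖ ^ 2) ^ 2 ≤ 9 * (‖x‖ ^ 2 * ‖y‖ ^ 2) := by
        have hb1 : 0 ≤ 3 * (‖x‖ * ‖y‖) - (2 * (inner ℝ x y : ℝ) + ‖y‖ ^ 2) := by
          nlinarith [hia.2]
        have hb2 : 0 ≤ 3 * (‖x‖ * ‖y‖) + (2 * (inner ℝ x y : ℝ) + ‖y‖ ^ 2) := by
          nlinarith [hia.1]
        nlinarith [mul_nonneg hb1 hb2]
      have hB := taylor_scaled hq (show (0:ℝ) < ‖x‖ ^ 2 by positivity) h1 h3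
      rw [hav, rpow_sq_helper (norm_nonneg (x + y)), rpow_sq_helper (norm_nonneg x),
        rpow_sq_helper (norm_nonneg x), rpow_sq_helper (norm_nonneg x),
        show 2 * (p / 2) = p by ring, show 2 * (p / 2 - 1) = p - 2 by ring,
        show 2 * (p / 2 - 2) = p - 4 by ring] at hB
      have e5 : ‖x‖ ^ (p - 4) * (‖x‖ ^ 2 * ‖y‖ ^ 2) = ‖x‖ ^ (p - 2) * ‖y‖ ^ 2 := by
        rw [← Real.rpow_natCast ‖x‖ 2, ← mul_assoc, ← Real.rpow_add hx,
          show p - 4 + ((2:ℕ):ℝ) = p - 2 by push_cast; ring]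
      have hxp4 : (0:ℝ) ≤ ‖x‖ ^ (p - 4) := Real.rpow_nonneg (norm_nonneg x) _
      have hE : ‖x + y‖ ^ p - ‖x‖ ^ p - p * ‖x‖ ^ (p - 2) * (inner ℝ x y : ℝ)
          = (‖x + y‖ ^ p - ‖x‖ ^ p
              - p / 2 * ‖x‖ ^ (p - 2) * (2 * (inner ℝ x y : ℝ) + ‖y‖ ^ 2))
            - (- (p / 2 * ‖x‖ ^ (p - 2) * ‖y‖ ^ 2)) := by ring
      have htri : |‖x + y‖ ^ p - ‖x‖ ^ p - p * ‖x‖ ^ (p - 2) * (inner ℝ x y : ℝ)|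
          ≤ |‖x + y‖ ^ p - ‖x‖ ^ p
              - p / 2 * ‖x‖ ^ (p - 2) * (2 * (inner ℝ x y : ℝ) + ‖y‖ ^ 2)|
            + p / 2 * ‖x‖ ^ (p - 2) * ‖y‖ ^ 2 := by
        rw [hE, sub_neg_eq_add]
        refine (abs_add_le _ _).trans ?_
        rw [abs_of_nonneg (by positivity : (0:ℝ) ≤ p / 2 * ‖x‖ ^ (p - 2) * ‖y‖ ^ 2)]
      have hB2 : (p / 2) ^ 2 * 4 ^ (p / 2) * ‖x‖ ^ (p - 4)
            * (2 * (inner ℝ x y : ℝ) + ‖y‖ ^ 2) ^ 2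
          ≤ (p / 2) ^ 2 * 4 ^ (p / 2) * (9 * (‖x‖ ^ (p - 2) * ‖y‖ ^ 2)) := by
        have h9 : ‖x‖ ^ (p - 4) * (2 * (inner ℝ x y : ℝ) + ‖y‖ ^ 2) ^ 2
            ≤ ‖x‖ ^ (p - 4) * (9 * (‖x‖ ^ 2 * ‖y‖ ^ 2)) :=
          mul_le_mul_of_nonneg_left hv2 hxp4
        have h10 := mul_le_mul_of_nonneg_left h9
          (by positivity : (0:ℝ) ≤ (p / 2) ^ 2 * 4 ^ (p / 2))
        calc (p / 2) ^ 2 * 4 ^ (p / 2) * ‖x‖ ^ (p - 4)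
              * (2 * (inner ℝ x y : ℝ) + ‖y‖ ^ 2) ^ 2
            = (p / 2) ^ 2 * 4 ^ (p / 2)
              * (‖x‖ ^ (p - 4) * (2 * (inner ℝ x y : ℝ) + ‖y‖ ^ 2) ^ 2) := by ring
          _ ≤ (p / 2) ^ 2 * 4 ^ (p / 2) * (‖x‖ ^ (p - 4) * (9 * (‖x‖ ^ 2 * ‖y‖ ^ 2))) := h10
          _ = (p / 2) ^ 2 * 4 ^ (p / 2) * (9 * (‖x‖ ^ (p - 2) * ‖y‖ ^ 2)) := by
              rw [show ‖x‖ ^ (p - 4) * (9 * (‖x‖ ^ 2 * ‖y‖ ^ 2))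
                  = 9 * (‖x‖ ^ (p - 4) * (‖x‖ ^ 2 * ‖y‖ ^ 2)) by ring, e5]
      refine (htri.trans (add_le_add (hB.trans hB2) le_rfl)).trans ?_
      nlinarith [mul_nonneg h2p.le hT, mul_nonneg hp0.le hT, hT,
        mul_nonneg (mul_nonneg (sq_nonneg (p / 2)) h4q.le) hyp,
        mul_nonneg h2p.le hyp, mul_nonneg hp0.le hyp, hyp]
  · -- easy case : ‖x‖ < ‖y‖
    have hy0 : 0 < ‖y‖ := lt_of_le_of_lt (norm_nonneg x) hxy
    have hb1 : ‖x + y‖ ^ p ≤ 2 ^ p * ‖y‖ ^ p := by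
      calc ‖x + y‖ ^ p ≤ (2 * ‖y‖) ^ p :=
            Real.rpow_le_rpow (norm_nonneg _) (by linarith [norm_add_le x y]) hp0.le
        _ = 2 ^ p * ‖y‖ ^ p := Real.mul_rpow (by norm_num) (norm_nonneg y)
    have hb2 : ‖x‖ ^ p ≤ ‖y‖ ^ p := Real.rpow_le_rpow (norm_nonneg x) hxy.le hp0.le
    have hi2 : |(inner ℝ x y : ℝ)| ≤ ‖y‖ ^ 2 := hiCS.trans (by nlinarith [norm_nonneg x])
    have hP : (0:ℝ) ≤ p * ‖x‖ ^ (p - 2) := mul_nonneg hp0.le hxp2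
    have hPi : |p * ‖x‖ ^ (p - 2) * inner ℝ x y| ≤ p * ‖x‖ ^ (p - 2) * ‖y‖ ^ 2 := by
      rw [abs_mul, abs_of_nonneg hP]
      exact mul_le_mul_of_nonneg_left hi2 hP
    have hxyp : (0:ℝ) ≤ ‖x + y‖ ^ p := Real.rpow_nonneg (norm_nonneg _) _
    have hxp : (0:ℝ) ≤ ‖x‖ ^ p := Real.rpow_nonneg (norm_nonneg _) _
    have hPia := abs_le.1 hPi
    rw [abs_le]
    constructor
    · nlinarith [mul_nonneg (mul_nonneg (sq_nonneg (p / 2)) h4q.le) hT,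
        mul_nonneg (mul_nonneg (sq_nonneg (p / 2)) h4q.le) hyp,
        mul_nonneg h2p.le hT, mul_nonneg hp0.le hyp, mul_nonneg hp0.le hT, hT, hyp]
    · nlinarith [mul_nonneg (mul_nonneg (sq_nonneg (p / 2)) h4q.le) hT,
        mul_nonneg (mul_nonneg (sq_nonneg (p / 2)) h4q.le) hyp,
        mul_nonneg h2p.le hT, mul_nonneg hp0.le hyp, mul_nonneg hp0.le hT, hT, hyp]
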